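/- Define f(c) := sup_{φ ∈ [0, 2π]} |A_k(c, φ)|² where |A_k|² is given by the Case C formula: |A_k|² = ((2/3)c³ sin φ + (1/6)c³ sin 2φ − (1/3)c³ sin 3φ − c² sin φ + (1/2)c² sin 2φ − c sin φ)² + (−(7/3)c³ cos φ − (1/6)c³ cos 2φ + (1/3)c³ cos 3φ + (13/6)c³ + 3c² cos φ − (1/2)c² cos 2φ − (5/2)c² + 1)². Then there exists φ such that |A_k(0.4, φ)|² > 1. -/

import Mathlib

/-!
Expanding the multiple angles, the imaginary part of `A_k` is `sin φ` times a polynomial in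
`cos φ` and the real part is a polynomial in `cos φ`, so `|A_k|²` is a polynomial in `x = cos φ`
on `[-1, 1]`. At `c = 2/5` its value at `x = 3/4` is `1.00083…`, just above `1`.
-/

noncomputable section

/-- The Case C squared amplification factor (equation (34) of the paper). -/
def caseCAmp2 (c φ : ℝ) : ℝ :=
  ((2/3) * c ^ 3 * Real.sin φ + (1/6) * c ^ 3 * Real.sin (2 * φ)
      - (1/3) * c ^ 3 * Real.sin (3 * φ) - c ^ 2 * Real.sin φ
      + (1/2) * c ^ 2 * Real.sin (2 * φ) - c * Real.sin φ) ^ 2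
    + (-(7/3) * c ^ 3 * Real.cos φ - (1/6) * c ^ 3 * Real.cos (2 * φ)
      + (1/3) * c ^ 3 * Real.cos (3 * φ) + (13/6) * c ^ 3
      + 3 * c ^ 2 * Real.cos φ - (1/2) * c ^ 2 * Real.cos (2 * φ)
      - (5/2) * c ^ 2 + 1) ^ 2

def caseCImDivSin (c x : ℝ) : ℝ :=
  c ^ 3 / 3 * (4 * x + 3) * (1 - x) - c ^ 2 * (1 - x) - c

def caseCRe (c x : ℝ) : ℝ :=
  1 + c ^ 3 / 3 * (1 - x) ^ 2 * (4 * x + 7) - c ^ 2 * (1 - x) * (2 - x)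

open Real

theorem caseCAmp2_eq (c φ : ℝ) :
    caseCAmp2 c φ = (sin φ * caseCImDivSin c (cos φ)) ^ 2 + caseCRe c (cos φ) ^ 2 := by
  have hsin_cube : sin φ ^ 3 = sin φ * (1 - cos φ ^ 2) := by rw [← sin_sq]; ring
  rw [caseCAmp2, caseCImDivSin, caseCRe, sin_two_mul, sin_three_mul, cos_two_mul,
    cos_three_mul, hsin_cube]
  ring

theorem caseCAmp2_arccos (c : ℝ) {x : ℝ} (hx₁ : -1 ≤ x) (hx₂ : x ≤ 1) :
    caseCAmp2 c (arccos x) = (1 - x ^ 2) * caseCImDivSin c x ^ 2 + caseCRe c x ^ 2 := by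
  rw [caseCAmp2_eq, mul_pow, sin_sq, cos_arccos hx₁ hx₂]

/-- At Courant number `c = 0.4`, above the critical value `c* ≈ 0.3625`, some
Fourier mode of the Case C scheme is amplified. -/
theorem stmt_14 : ∃ φ : ℝ, caseCAmp2 0.4 φ > 1 := by
  refine ⟨arccos (3 / 4), ?_⟩
  rw [caseCAmp2_arccos _ (by norm_num) (by norm_num), caseCImDivSin, caseCRe]
  norm_num
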